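/- arXiv:1407.0752 — 3 statements merged into one kernel-verified Lean document; each statement's English description precedes it below -/
import Mathlib

section
/- Let V be a finite nonempty set and let φ : Fin 5 → Equiv.Perm V be a family of fixed-point-free involutions (encoding a 5-colored graph with n = card V vertices). For distinct colors i, j let g_{ij} denote the number of orbits on V of the subgroup of Equiv.Perm V generated by φ i and φ j. Assume that for every four pairwise distinct colors i, j, k, l one has g_{ij} = g_{kl}, and that for every four pairwise distinct colors i, j, k, l one has 2·(g_{ij} + g_{ik} + g_{il}) = 4 + n. Then there exists a natural number m such that g_{ij} = m for all distinct i, j, and n = 6·m − 4. -/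
/-- Let `V` be a finite nonempty set and `φ : Fin 5 → Equiv.Perm V` a
family of fixed-point-free involutions (a 5-colored graph with `n = card V` vertices).
For distinct colors `i, j` let `g i j` be the number of orbits on `V` of the subgroup of
`Equiv.Perm V` generated by `φ i` and `φ j`.  If `g i j = g k l` for all pairwise distinct
`i, j, k, l` and `2 * (g i j + g i k + g i l) = 4 + n` for all pairwise distinct
`i, j, k, l`, then there is `m : ℕ` with `g i j = m` for all `i ≠ j` and `n = 6 * m - 4`. -/
theorem simple_crystallization_f_vector
    {V : Type*} [Fintype V] [Nonempty V] [DecidableEq V]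
    (φ : Fin 5 → Equiv.Perm V)
    (hinv : ∀ i, Function.Involutive (φ i))
    (hfpf : ∀ i v, (φ i) v ≠ v)
    (g : Fin 5 → Fin 5 → ℕ)
    (hg : ∀ i j, g i j =
      Nat.card (MulAction.orbitRel.Quotient
        (Subgroup.closure {φ i, φ j} : Subgroup (Equiv.Perm V)) V))
    (h1 : ∀ i j k l : Fin 5,
      i ≠ j → i ≠ k → i ≠ l → j ≠ k → j ≠ l → k ≠ l → g i j = g k l)
    (h2 : ∀ i j k l : Fin 5,
      i ≠ j → i ≠ k → i ≠ l → j ≠ k → j ≠ l → k ≠ l →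
      2 * (g i j + g i k + g i l) = 4 + Fintype.card V) :
    ∃ m : ℕ, (∀ i j : Fin 5, i ≠ j → g i j = m) ∧ Fintype.card V = 6 * m - 4 := by
  have hsymm : ∀ i j : Fin 5, g i j = g j i := by
    intro i j
    rw [hg, hg, Set.pair_comm]
  have hexists : ∀ i j k : Fin 5, ∃ l m : Fin 5,
      l ≠ m ∧ l ≠ i ∧ l ≠ j ∧ l ≠ k ∧ m ≠ i ∧ m ≠ j ∧ m ≠ k := by decide
  have hA : ∀ i j k : Fin 5, i ≠ j → i ≠ k → j ≠ k → g i j = g i k := by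
    intro i j k hij hik hjk
    obtain ⟨l, m, hlm, hli, hlj, hlk, hmi, hmj, hmk⟩ := hexists i j k
    have e1 := h1 i j l m hij hli.symm hmi.symm hlj.symm hmj.symm hlm
    have e2 := h1 i k l m hik hli.symm hmi.symm hlk.symm hmk.symm hlm
    rw [e1, e2]
  have key : ∀ i j : Fin 5, i ≠ j → g i j = g 0 1 := by
    intro i j hij
    have step : ∀ k : Fin 5, k ≠ 0 → g 0 k = g 0 1 := by
      intro k hk
      by_cases hk1 : k = 1
      · rw [hk1]
      · exact hA 0 k 1 (Ne.symm hk) (by decide) hk1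
    by_cases hi0 : i = 0
    · subst hi0; exact step j (Ne.symm hij)
    · by_cases hj0 : j = 0
      · subst hj0
        rw [hsymm]
        exact step i hi0
      · calc g i j = g i 0 := hA i j 0 hij hi0 hj0
          _ = g 0 i := hsymm i 0
          _ = g 0 1 := step i hi0
  refine ⟨g 0 1, key, ?_⟩
  have e := h2 0 1 2 3 (by decide) (by decide) (by decide) (by decide) (by decide) (by decide)
  rw [key 0 1 (by decide), key 0 2 (by decide), key 0 3 (by decide)] at e
  omega
end

section
/- Let V be a finite nonempty set and φ : Fin 5 → Equiv.Perm V a family of fixed-point-free involutions encoding a 5-colored graph. Assume: (a) for every color c ∈ Fin 5 there exists a map f_c : V → Bool such that f_c ((φ i) v) ≠ f_c v for every vertex v and every color i ≠ c (each 4-color subgraph is bipartite); and (b) for every 3-element subset D ⊆ Fin 5 the subgroup of Equiv.Perm V generated by {φ i : i ∈ D} acts transitively on V (each 3-color subgraph is connected). Then there exists a map f : V → Bool with f ((φ i) v) ≠ f v for every vertex v and every color i ∈ Fin 5, i.e., the whole graph is bipartite. -/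
/-- Let `φ : Fin 5 → Equiv.Perm V` encode a 5-colored graph by
fixed-point-free involutions on the finite nonempty vertex set `V`.  If every 4-color
subgraph is bipartite and every 3-color subgraph is connected (the subgroup generated by
the corresponding involutions acts transitively on `V`), then the whole graph is
bipartite. -/
theorem simple_crystallization_bipartite
    {V : Type*} [Fintype V] [Nonempty V] [DecidableEq V]
    (φ : Fin 5 → Equiv.Perm V)
    (hinv : ∀ i, Function.Involutive (φ i))
    (hfpf : ∀ i v, (φ i) v ≠ v)
    (hbip : ∀ c : Fin 5, ∃ f : V → Bool, ∀ v : V, ∀ i : Fin 5, i ≠ c →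
      f ((φ i) v) ≠ f v)
    (hconn : ∀ D : Set (Fin 5), D.ncard = 3 →
      MulAction.IsPretransitive (Subgroup.closure (φ '' D) : Subgroup (Equiv.Perm V)) V) :
    ∃ f : V → Bool, ∀ v : V, ∀ i : Fin 5, f ((φ i) v) ≠ f v := by
  obtain ⟨f₀, hf₀⟩ := hbip 0
  obtain ⟨f₄, hf₄⟩ := hbip 4
  set D : Set (Fin 5) := {1, 2, 3} with hD
  have hDcard : D.ncard = 3 := by
    rw [show D = (↑({1, 2, 3} : Finset (Fin 5)) : Set (Fin 5)) by simp [hD],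
      Set.ncard_coe_finset]
    decide
  set g : V → Bool := fun v => f₀ v == f₄ v with hg
  -- g is invariant under all generators φ i, i ∈ D
  have hgen : ∀ i ∈ D, ∀ v, g ((φ i) v) = g v := by
    intro i hi v
    have h1 : i ≠ 0 := by
      rcases hi with h | h | h <;> subst h <;> decide
    have h4 : i ≠ 4 := by
      rcases hi with h | h | h <;> subst h <;> decide
    have e0 := hf₀ v i h1
    have e4 := hf₄ v i h4
    simp only [hg]
    cases hv0 : f₀ v <;> cases hv4 : f₄ v <;>
      simp_all [Bool.not_eq_true] <;> simp [e0, e4]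
  -- hence invariant under the closure
  have hclo : ∀ σ ∈ Subgroup.closure (φ '' D), ∀ v, g (σ v) = g v := by
    intro σ hσ
    induction hσ using Subgroup.closure_induction with
    | mem x hx =>
      obtain ⟨i, hi, rfl⟩ := hx
      exact hgen i hi
    | one => intro v; simp
    | mul x y hx hy ihx ihy => intro v; simp [Equiv.Perm.mul_apply, ihx, ihy]
    | inv x hx ih =>
      intro v
      have := ih (x⁻¹ v)
      simpa using this.symm
  -- g is constant by transitivity
  have htrans := hconn D hDcard
  have hconst : ∀ v w : V, g v = g w := by
    intro v w
    obtain ⟨σ, hσ⟩ := htrans.exists_smul_eq v w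
    have := hclo (σ : Equiv.Perm V) σ.2 v
    rw [show ((σ : Equiv.Perm V)) v = w from hσ] at this
    exact this.symm
  refine ⟨f₀, fun v i => ?_⟩
  by_cases h0 : i = 0
  · subst h0
    have e4 := hf₄ v 0 (by decide)
    have hgv := hconst ((φ 0) v) v
    simp only [hg] at hgv
    cases hv0 : f₀ v <;> cases hv4 : f₄ v <;> simp_all [Bool.not_eq_true]
  · exact hf₀ v i h0
end

section
/- Let V₁ and V₂ be finite sets, let φ¹ : Fin (d+1) → Equiv.Perm V₁ and φ² : Fin (d+1) → Equiv.Perm V₂ be families of fixed-point-free involutions, and let v₁ ∈ V₁, v₂ ∈ V₂. On the vertex set W = {u : V₁ // u ≠ v₁} ⊕ {u : V₂ // u ≠ v₂}, define for each color i the map ψ i : W → W by: ψ i (Sum.inl u) = Sum.inr ⟨(φ² i) v₂⟩ if (φ¹ i) u = v₁, and Sum.inl ⟨(φ¹ i) u⟩ otherwise; and symmetrically ψ i (Sum.inr u) = Sum.inl ⟨(φ¹ i) v₁⟩ if (φ² i) u = v₂, and Sum.inr ⟨(φ² i) u⟩ otherwise. Then for every color i the map ψ i is a well-defined fixed-point-free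 involution of W. -/
/-- The connected-sum map of two fixed-point-free permutations `a : Equiv.Perm V₁` and
`b : Equiv.Perm V₂` along vertices `v₁ : V₁` and `v₂ : V₂`: delete `v₁` and `v₂` and join
the former `a`-neighbor of `v₁` to the former `b`-neighbor of `v₂`. -/
def connSumMap {V₁ V₂ : Type*} [DecidableEq V₁] [DecidableEq V₂]
    (a : Equiv.Perm V₁) (b : Equiv.Perm V₂) (v₁ : V₁) (v₂ : V₂)
    (ha : ∀ v, a v ≠ v) (hb : ∀ v, b v ≠ v) :
    ({u : V₁ // u ≠ v₁} ⊕ {u : V₂ // u ≠ v₂}) → ({u : V₁ // u ≠ v₁} ⊕ {u : V₂ // u ≠ v₂})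
  | Sum.inl u => if h : a u.val = v₁ then Sum.inr ⟨b v₂, hb v₂⟩ else Sum.inl ⟨a u.val, h⟩
  | Sum.inr u => if h : b u.val = v₂ then Sum.inl ⟨a v₁, ha v₁⟩ else Sum.inr ⟨b u.val, h⟩

/-! The connected-sum map is symmetric under exchanging the two summands, so each property
only has to be checked on the left summand, for an arbitrary pair `(a, b)`. -/

section

variable {V₁ V₂ : Type*} [DecidableEq V₁] [DecidableEq V₂]
  {a : Equiv.Perm V₁} {b : Equiv.Perm V₂} {v₁ : V₁} {v₂ : V₂}
  {ha : ∀ v, a v ≠ v} {hb : ∀ v, b v ≠ v}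

theorem connSumMap_swap (w : {u : V₂ // u ≠ v₂} ⊕ {u : V₁ // u ≠ v₁}) :
    connSumMap a b v₁ v₂ ha hb w.swap = (connSumMap b a v₂ v₁ hb ha w).swap := by
  rcases w with u | u <;> simp only [Sum.swap_inl, Sum.swap_inr, connSumMap] <;> split_ifs <;> rfl

theorem connSumMap_ne_self_inl (u : {u : V₁ // u ≠ v₁}) :
    connSumMap a b v₁ v₂ ha hb (.inl u) ≠ .inl u := by
  obtain ⟨u, hu⟩ := u
  by_cases h : a u = v₁ <;> simp [connSumMap, h, ha u]

theorem connSumMap_ne_self (w : {u : V₁ // u ≠ v₁} ⊕ {u : V₂ // u ≠ v₂}) :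
    connSumMap a b v₁ v₂ ha hb w ≠ w := by
  rcases w with u | u
  · exact connSumMap_ne_self_inl u
  · rw [← Sum.swap_inl, connSumMap_swap]
    exact Sum.swap_leftInverse.injective.ne (connSumMap_ne_self_inl u)

theorem connSumMap_connSumMap_inl (hai : Function.Involutive a) (hbi : Function.Involutive b)
    (u : {u : V₁ // u ≠ v₁}) :
    connSumMap a b v₁ v₂ ha hb (connSumMap a b v₁ v₂ ha hb (.inl u)) = .inl u := by
  obtain ⟨u, hu⟩ := u
  by_cases h : a u = v₁
  · have hv₁ : a v₁ = u := h ▸ hai u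
    simp [connSumMap, h, hbi v₂, hv₁]
  · simp [connSumMap, h, hai u, hu]

theorem connSumMap_involutive (hai : Function.Involutive a) (hbi : Function.Involutive b) :
    Function.Involutive (connSumMap a b v₁ v₂ ha hb) := by
  rintro (u | u)
  · exact connSumMap_connSumMap_inl hai hbi u
  · rw [← Sum.swap_inl, connSumMap_swap, connSumMap_swap, connSumMap_connSumMap_inl hbi hai]

end

theorem connSum_involutive_fixedPointFree_general
    {d : ℕ} {V₁ V₂ : Type*} [DecidableEq V₁] [DecidableEq V₂]
    (φ₁ : Fin (d + 1) → Equiv.Perm V₁) (φ₂ : Fin (d + 1) → Equiv.Perm V₂)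
    (h₁inv : ∀ i, Function.Involutive (φ₁ i)) (h₂inv : ∀ i, Function.Involutive (φ₂ i))
    (h₁fpf : ∀ i v, (φ₁ i) v ≠ v) (h₂fpf : ∀ i v, (φ₂ i) v ≠ v)
    (v₁ : V₁) (v₂ : V₂) (i : Fin (d + 1)) :
    Function.Involutive (connSumMap (φ₁ i) (φ₂ i) v₁ v₂ (h₁fpf i) (h₂fpf i)) ∧
    ∀ w, connSumMap (φ₁ i) (φ₂ i) v₁ v₂ (h₁fpf i) (h₂fpf i) w ≠ w :=
  ⟨connSumMap_involutive (h₁inv i) (h₂inv i), connSumMap_ne_self⟩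

/-- For families `φ₁ : Fin (d+1) → Equiv.Perm V₁` and
`φ₂ : Fin (d+1) → Equiv.Perm V₂` of fixed-point-free involutions and vertices `v₁ : V₁`,
`v₂ : V₂`, the connected-sum map `ψ i` of each color `i` is a well-defined
fixed-point-free involution of the vertex set `{u // u ≠ v₁} ⊕ {u // u ≠ v₂}`. -/
theorem connSum_involutive_fixedPointFree
    {d : ℕ} {V₁ V₂ : Type*} [Fintype V₁] [Fintype V₂] [DecidableEq V₁] [DecidableEq V₂]
    (φ₁ : Fin (d + 1) → Equiv.Perm V₁) (φ₂ : Fin (d + 1) → Equiv.Perm V₂)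
    (h₁inv : ∀ i, Function.Involutive (φ₁ i)) (h₂inv : ∀ i, Function.Involutive (φ₂ i))
    (h₁fpf : ∀ i v, (φ₁ i) v ≠ v) (h₂fpf : ∀ i v, (φ₂ i) v ≠ v)
    (v₁ : V₁) (v₂ : V₂) (i : Fin (d + 1)) :
    Function.Involutive (connSumMap (φ₁ i) (φ₂ i) v₁ v₂ (h₁fpf i) (h₂fpf i)) ∧
    ∀ w, connSumMap (φ₁ i) (φ₂ i) v₁ v₂ (h₁fpf i) (h₂fpf i) w ≠ w :=
  connSum_involutive_fixedPointFree_general φ₁ φ₂ h₁inv h₂inv h₁fpf h₂fpf v₁ v₂ i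
end
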